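/- arXiv:2108.04327 — 5 statements merged into one kernel-verified Lean document; each statement's English description precedes it below -/
import Mathlib

section
/- Let V be a nonempty finite set, let τ > 0, and let g : V × V → ℝ satisfy g(v,v) = 0 for all v. Suppose that for every v ∈ V one has 2τ·∑_{u∈V} max(−g(v,u), 0) < 1. Then the scheme matrix A : V × V → ℝ defined by A(v,v) = 1 + τ·∑_{u∈V} g(v,u) and A(v,u) = −τ·g(v,u) for u ≠ v is invertible. -/
/-- The semi-implicit scheme matrix is invertible provided the negative
parts of the weights are small: 2τ·∑_u max(−g(v,u),0) < 1 for every v. -/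
theorem scheme_matrix_invertible_of_small_negative_part
    {V : Type*} [Fintype V] [Nonempty V] [DecidableEq V]
    (τ : ℝ) (hτ : 0 < τ) (g : V → V → ℝ)
    (hdiag : ∀ v, g v v = 0)
    (hsmall : ∀ v, 2 * τ * ∑ u, max (-(g v u)) 0 < 1) :
    IsUnit (Matrix.of (fun v u : V =>
      if u = v then 1 + τ * ∑ w, g v w else -(τ * g v u))) := by
  rw [Matrix.isUnit_iff_isUnit_det, isUnit_iff_ne_zero]
  apply det_ne_zero_of_sum_row_lt_diag
  intro v
  have hN := hsmall v
  set N := ∑ u, max (-(g v u)) 0 with hNdef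
  have hN0 : 0 ≤ N := Finset.sum_nonneg fun u _ => le_max_right _ _
  set S := ∑ w, g v w with hSdef
  have habs : ∀ u, |g v u| = g v u + 2 * max (-(g v u)) 0 := by
    intro u
    rcases le_total 0 (g v u) with h | h
    · rw [abs_of_nonneg h, max_eq_right (by linarith)]; ring
    · rw [abs_of_nonpos h, max_eq_left (by linarith)]; ring
  have hSN : -N ≤ S := by
    rw [hSdef, hNdef, ← Finset.sum_neg_distrib]
    exact Finset.sum_le_sum fun u _ => by
      have := le_max_left (-(g v u)) 0; linarith
  have hτN : 2 * τ * N < 1 := hN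
  have hdiagpos : 0 < 1 + τ * S := by nlinarith
  have hrow : ∑ u ∈ Finset.univ.erase v,
      ‖Matrix.of (fun v u : V =>
        if u = v then 1 + τ * ∑ w, g v w else -(τ * g v u)) v u‖
      = τ * (S + 2 * N) := by
    have : ∀ u ∈ Finset.univ.erase v,
        ‖Matrix.of (fun v u : V =>
          if u = v then 1 + τ * ∑ w, g v w else -(τ * g v u)) v u‖
        = τ * |g v u| := by
      intro u hu
      have hne : u ≠ v := (Finset.mem_erase.mp hu).1
      simp [Matrix.of_apply, hne, abs_mul, abs_of_pos hτ]
    rw [Finset.sum_congr rfl this]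
    have h2 : ∑ u ∈ Finset.univ.erase v, τ * |g v u| = ∑ u, τ * |g v u| := by
      apply Finset.sum_erase
      simp [hdiag v]
    rw [h2]
    simp_rw [habs]
    rw [← Finset.mul_sum, Finset.sum_add_distrib, ← Finset.mul_sum]
  rw [hrow]
  have hdd : ‖Matrix.of (fun v u : V =>
      if u = v then 1 + τ * ∑ w, g v w else -(τ * g v u)) v v‖ = 1 + τ * S := by
    have he : Matrix.of (fun v u : V =>
        if u = v then 1 + τ * ∑ w, g v w else -(τ * g v u)) v v = 1 + τ * S := by
      simp [hSdef]
    rw [he, Real.norm_eq_abs, abs_of_pos hdiagpos]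
  rw [hdd]
  nlinarith
end

section
/- Let V be a nonempty finite set, let τ > 0, and let g : V × V → ℝ satisfy g(v,v) = 0 for all v and 2τ·∑_{u∈V} max(−g(v,u), 0) < 1 for every v ∈ V. Then for every f : V → ℝ there exists a unique F : V → ℝ such that for every v ∈ V: F(v) − f(v) = τ·∑_{u∈V} g(v,u)·(F(u) − F(v)). -/
/-- Maximum-principle lemma: the homogeneous system has only the zero solution. -/
lemma scheme_ker_zero
    {V : Type*} [Fintype V] [Nonempty V]
    (τ : ℝ) (hτ : 0 < τ) (g : V → V → ℝ)
    (hsmall : ∀ v, 2 * τ * ∑ u, max (-(g v u)) 0 < 1)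
    (F : V → ℝ) (hF : ∀ v, F v = τ * ∑ u, g v u * (F u - F v)) :
    F = 0 := by
  obtain ⟨v₀, -, hmax⟩ := Finset.exists_max_image Finset.univ F ⟨Classical.arbitrary V, Finset.mem_univ _⟩
  obtain ⟨v₁, -, hmin⟩ := Finset.exists_min_image Finset.univ F ⟨Classical.arbitrary V, Finset.mem_univ _⟩
  have hmax' : ∀ u, F u ≤ F v₀ := fun u => hmax u (Finset.mem_univ u)
  have hmin' : ∀ u, F v₁ ≤ F u := fun u => hmin u (Finset.mem_univ u)
  set M := F v₀ with hM
  set m := F v₁ with hm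
  have hMm : m ≤ M := hmin' v₀
  have hS₀ : (0:ℝ) ≤ ∑ u, max (-(g v₀ u)) 0 :=
    Finset.sum_nonneg fun u _ => le_max_right _ _
  have hS₁ : (0:ℝ) ≤ ∑ u, max (-(g v₁ u)) 0 :=
    Finset.sum_nonneg fun u _ => le_max_right _ _
  -- termwise bound at the max
  have key : ∀ (v : V), (∀ u, F u ≤ F v) →
      ∑ u, g v u * (F u - F v) ≤ (∑ u, max (-(g v u)) 0) * (M - m) := by
    intro v hv
    rw [Finset.sum_mul]
    refine Finset.sum_le_sum fun u _ => ?_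
    rcases le_or_gt 0 (g v u) with h | h
    · have h1 : g v u * (F u - F v) ≤ 0 :=
        mul_nonpos_of_nonneg_of_nonpos h (by linarith [hv u])
      have h2 : max (-(g v u)) 0 = 0 := max_eq_right (by linarith)
      rw [h2]; linarith
    · have h2 : max (-(g v u)) 0 = -(g v u) := max_eq_left (by linarith)
      rw [h2]
      have : F v - F u ≤ M - m := by
        have := hmax' v
        have := hmin' u
        linarith
      nlinarith [hv u, hmin' u, hmax' v]
  -- termwise bound at the min
  have key' : ∀ (v : V), (∀ u, F v ≤ F u) →
      -((∑ u, max (-(g v u)) 0) * (M - m)) ≤ ∑ u, g v u * (F u - F v) := by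
    intro v hv
    rw [Finset.sum_mul, ← Finset.sum_neg_distrib]
    refine Finset.sum_le_sum fun u _ => ?_
    rcases le_or_gt 0 (g v u) with h | h
    · have h2 : max (-(g v u)) 0 = 0 := max_eq_right (by linarith)
      rw [h2]
      have : 0 ≤ g v u * (F u - F v) :=
        mul_nonneg h (by linarith [hv u])
      linarith
    · have h2 : max (-(g v u)) 0 = -(g v u) := max_eq_left (by linarith)
      rw [h2]
      have hle : F u - F v ≤ M - m := by
        have := hmax' u
        have := hmin' v
        linarith
      nlinarith [hv u]
  have h1 : M ≤ τ * ((∑ u, max (-(g v₀ u)) 0) * (M - m)) := by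
    calc M = τ * ∑ u, g v₀ u * (F u - F v₀) := hF v₀
    _ ≤ τ * ((∑ u, max (-(g v₀ u)) 0) * (M - m)) :=
        mul_le_mul_of_nonneg_left (key v₀ hmax') hτ.le
  have h2 : -(τ * ((∑ u, max (-(g v₁ u)) 0) * (M - m))) ≤ m := by
    have := mul_le_mul_of_nonneg_left (key' v₁ hmin') hτ.le
    calc -(τ * ((∑ u, max (-(g v₁ u)) 0) * (M - m)))
        ≤ τ * ∑ u, g v₁ u * (F u - F v₁) := by linarith [this]
    _ = m := (hF v₁).symm
  have hMm' : M ≤ m := by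
    nlinarith [hsmall v₀, hsmall v₁, hS₀, hS₁]
  have hMeq : M = m := le_antisymm hMm' hMm
  have hM0 : M = 0 := by
    rw [hMeq] at h1 h2
    simp only [sub_self, mul_zero, neg_zero] at h1 h2
    linarith [hMeq]
  funext v
  have := hmax' v
  have := hmin' v
  simp only [Pi.zero_apply]
  rw [hMeq] at hM0
  linarith [hM0 ▸ this]

/-- Existence and uniqueness of the new state in one step of the
semi-implicit scheme, provided the negative parts of the weights are small. -/
theorem scheme_step_existsUnique
    {V : Type*} [Fintype V] [Nonempty V]
    (τ : ℝ) (hτ : 0 < τ) (g : V → V → ℝ)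
    (hdiag : ∀ v, g v v = 0)
    (hsmall : ∀ v, 2 * τ * ∑ u, max (-(g v u)) 0 < 1) :
    ∀ f : V → ℝ, ∃! F : V → ℝ,
      ∀ v, F v - f v = τ * ∑ u, g v u * (F u - F v) := by
  -- the linear endomorphism of the scheme
  have hL : ∃ L : (V → ℝ) →ₗ[ℝ] (V → ℝ),
      ∀ F v, L F v = F v - τ * ∑ u, g v u * (F u - F v) := by
    refine ⟨{ toFun := fun F v => F v - τ * ∑ u, g v u * (F u - F v)
              map_add' := ?_
              map_smul' := ?_ }, fun F v => rfl⟩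
    · intro F G
      funext v
      simp only [Pi.add_apply]
      have : ∑ u, g v u * ((F u + G u) - (F v + G v))
          = ∑ u, g v u * (F u - F v) + ∑ u, g v u * (G u - G v) := by
        rw [← Finset.sum_add_distrib]
        exact Finset.sum_congr rfl fun u _ => by ring
      rw [this]; ring
    · intro c F
      funext v
      simp only [Pi.smul_apply, smul_eq_mul, RingHom.id_apply]
      have : ∑ u, g v u * (c * F u - c * F v)
          = c * ∑ u, g v u * (F u - F v) := by
        rw [Finset.mul_sum]
        exact Finset.sum_congr rfl fun u _ => by ring
      rw [this]; ring
  obtain ⟨L, hLapp⟩ := hL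
  have hinj : Function.Injective L := by
    rw [← LinearMap.ker_eq_bot]
    rw [LinearMap.ker_eq_bot']
    intro F hF0
    refine scheme_ker_zero τ hτ g hsmall F fun v => ?_
    have := congrFun hF0 v
    rw [hLapp] at this
    simp only [Pi.zero_apply] at this
    linarith
  have hsurj : Function.Surjective L := LinearMap.injective_iff_surjective.mp hinj
  intro f
  obtain ⟨F, hFf⟩ := hsurj f
  refine ⟨F, fun v => ?_, fun G hG => ?_⟩
  · have := congrFun hFf v
    rw [hLapp] at this
    linarith
  · apply hinj
    rw [hFf]
    funext v
    rw [hLapp]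
    linarith [hG v]
end

section
/- Let V be a nonempty finite set, τ > 0, and g : V × V → ℝ symmetric (g(v,u) = g(u,v)) with g(v,v) = 0 and g(v,u) ≥ 0 for all v, u. If f, F : V → ℝ satisfy one step of the semi-implicit scheme, i.e. F(v) − f(v) = τ·∑_{u∈V} g(v,u)·(F(u) − F(v)) for every v ∈ V, then ∑_{v∈V} F(v)² ≤ ∑_{v∈V} f(v)². -/
/-- Unconditional L² stability of one step of the semi-implicit scheme
with symmetric nonnegative weights (forward diffusion). -/
theorem scheme_step_L2_stability
    {V : Type*} [Fintype V] [Nonempty V]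
    (τ : ℝ) (hτ : 0 < τ) (g : V → V → ℝ)
    (hsymm : ∀ v u, g v u = g u v) (hdiag : ∀ v, g v v = 0)
    (hnonneg : ∀ v u, 0 ≤ g v u)
    (f F : V → ℝ)
    (hstep : ∀ v, F v - f v = τ * ∑ u, g v u * (F u - F v)) :
    ∑ v, (F v) ^ 2 ≤ ∑ v, (f v) ^ 2 := by
  set a : V → V → ℝ := fun v u => g v u * (F u - F v) * F v with ha
  have hS : (∑ v, ∑ u, a v u) ≤ 0 := by
    have h2 : (∑ v, ∑ u, a v u) + (∑ v, ∑ u, a v u)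
        = ∑ v, ∑ u, (a v u + a u v) := by
      rw [show (∑ v, ∑ u, (a v u + a u v)) = (∑ v, ∑ u, a v u) + ∑ v, ∑ u, a u v by
        rw [← Finset.sum_add_distrib]; exact Finset.sum_congr rfl fun v _ => by
          rw [← Finset.sum_add_distrib]]
      rw [Finset.sum_comm (f := fun v u => a u v)]
    have hterm : ∀ v u : V, a v u + a u v ≤ 0 := by
      intro v u
      have : a v u + a u v = -(g v u * (F u - F v) ^ 2) := by
        simp only [ha, hsymm u v]; ring
      rw [this]
      exact neg_nonpos.mpr (mul_nonneg (hnonneg v u) (sq_nonneg _))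
    nlinarith [Finset.sum_nonpos (fun v (_ : v ∈ Finset.univ) =>
      Finset.sum_nonpos (fun u (_ : u ∈ Finset.univ) => hterm v u)), h2]
  have key : ∑ v, F v * (F v - f v) ≤ 0 := by
    have : ∑ v, F v * (F v - f v) = τ * ∑ v, ∑ u, a v u := by
      rw [Finset.mul_sum]
      refine Finset.sum_congr rfl fun v _ => ?_
      rw [hstep v]
      simp only [ha, Finset.mul_sum]
      exact Finset.sum_congr rfl fun u _ => by ring
    rw [this]
    exact mul_nonpos_of_nonneg_of_nonpos hτ.le hS
  have hmix : ∑ v, F v * f v ≤ (∑ v, (F v) ^ 2) / 2 + (∑ v, (f v) ^ 2) / 2 := by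
    have : ∀ v : V, F v * f v ≤ (F v) ^ 2 / 2 + (f v) ^ 2 / 2 := fun v => by
      nlinarith [sq_nonneg (F v - f v)]
    calc ∑ v, F v * f v ≤ ∑ v, ((F v) ^ 2 / 2 + (f v) ^ 2 / 2) :=
          Finset.sum_le_sum fun v _ => this v
      _ = (∑ v, (F v) ^ 2) / 2 + (∑ v, (f v) ^ 2) / 2 := by
          rw [Finset.sum_add_distrib, ← Finset.sum_div, ← Finset.sum_div]
  have expand : ∑ v, F v * (F v - f v) = ∑ v, (F v) ^ 2 - ∑ v, F v * f v := by
    rw [← Finset.sum_sub_distrib]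
    exact Finset.sum_congr rfl fun v _ => by ring
  linarith [key, hmix, expand]
end

section
/- Let V be a nonempty finite set with N = |V|, τ > 0, and g : V × V → ℝ symmetric (g(v,u) = g(u,v)) with g(v,v) = 0 and g(v,u) ≥ 0 for all v, u. If f, F : V → ℝ satisfy one step of the semi-implicit scheme, i.e. F(v) − f(v) = τ·∑_{u∈V} g(v,u)·(F(u) − F(v)) for every v ∈ V, then ∑_{v∈V} (F(v) − μ_F)² ≤ ∑_{v∈V} (f(v) − μ_f)², where μ_F = (1/N)·∑_{v∈V} F(v) and μ_f = (1/N)·∑_{v∈V} f(v). -/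
/-- The variance around the centroid does not increase in one step of the
semi-implicit scheme with symmetric nonnegative weights. -/
theorem scheme_step_variance_nonincreasing
    {V : Type*} [Fintype V] [Nonempty V]
    (τ : ℝ) (hτ : 0 < τ) (g : V → V → ℝ)
    (hsymm : ∀ v u, g v u = g u v) (hdiag : ∀ v, g v v = 0)
    (hnonneg : ∀ v u, 0 ≤ g v u)
    (f F : V → ℝ)
    (hstep : ∀ v, F v - f v = τ * ∑ u, g v u * (F u - F v)) :
    ∑ v, (F v - (1 / (Fintype.card V : ℝ)) * ∑ u, F u) ^ 2 ≤
      ∑ v, (f v - (1 / (Fintype.card V : ℝ)) * ∑ u, f u) ^ 2 := by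
  classical
  set N : ℝ := (Fintype.card V : ℝ) with hN
  set c : ℝ := (1 / N) * ∑ u, F u with hc
  -- the total diffusion flux vanishes
  have hzero : (∑ v, ∑ u, g v u * (F u - F v)) = 0 := by
    have h : (∑ v, ∑ u, g v u * (F u - F v)) = ∑ v, ∑ u, -(g v u * (F u - F v)) := by
      rw [Finset.sum_comm]
      refine Finset.sum_congr rfl fun u _ => Finset.sum_congr rfl fun v _ => ?_
      rw [hsymm]; ring
    have h2 : (∑ v, ∑ u, -(g v u * (F u - F v))) = -(∑ v, ∑ u, g v u * (F u - F v)) := by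
      simp
    have := h.trans h2
    linarith
  -- the Dirichlet-form term is nonpositive
  have hS : (∑ v, F v * ∑ u, g v u * (F u - F v)) ≤ 0 := by
    have e1 : (∑ v, F v * ∑ u, g v u * (F u - F v))
        = ∑ v, ∑ u, F v * (g v u * (F u - F v)) := by
      simp [Finset.mul_sum]
    have e2 : (∑ v, ∑ u, F v * (g v u * (F u - F v)))
        = ∑ v, ∑ u, F u * (g v u * (F v - F u)) := by
      rw [Finset.sum_comm]
      refine Finset.sum_congr rfl fun u _ => Finset.sum_congr rfl fun v _ => ?_
      rw [hsymm]
    have key : (∑ v, ∑ u, F v * (g v u * (F u - F v)))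
          + (∑ v, ∑ u, F u * (g v u * (F v - F u)))
        = ∑ v, ∑ u, -(g v u * (F u - F v) ^ 2) := by
      rw [← Finset.sum_add_distrib]
      refine Finset.sum_congr rfl fun v _ => ?_
      rw [← Finset.sum_add_distrib]
      refine Finset.sum_congr rfl fun u _ => ?_
      ring
    have hle : (∑ v, ∑ u, -(g v u * (F u - F v) ^ 2)) ≤ 0 := by
      apply Finset.sum_nonpos; intro v _
      apply Finset.sum_nonpos; intro u _
      simp only [neg_nonpos]
      exact mul_nonneg (hnonneg v u) (sq_nonneg _)
    linarith [e1, e2, key, hle]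
  -- the total displacement vanishes, so the centroids agree
  have hsumd : (∑ v, (F v - f v)) = 0 := by
    have h : (∑ v, (F v - f v)) = τ * ∑ v, ∑ u, g v u * (F u - F v) := by
      rw [Finset.mul_sum]
      exact Finset.sum_congr rfl fun v _ => hstep v
    rw [h, hzero, mul_zero]
  have hsumF : (∑ u, f u) = ∑ u, F u := by
    rw [Finset.sum_sub_distrib] at hsumd
    linarith
  have hFd : (∑ v, F v * (F v - f v)) = τ * ∑ v, F v * ∑ u, g v u * (F u - F v) := by
    rw [Finset.mul_sum]
    refine Finset.sum_congr rfl fun v _ => ?_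
    rw [hstep v]; ring
  have hcd : (∑ v, c * (F v - f v)) = 0 := by
    rw [← Finset.mul_sum, hsumd, mul_zero]
  have expand : (∑ v, (f v - c) ^ 2)
      = (∑ v, (F v - c) ^ 2) - 2 * (∑ v, F v * (F v - f v))
        + 2 * (∑ v, c * (F v - f v)) + (∑ v, (F v - f v) ^ 2) := by
    simp only [Finset.mul_sum, ← Finset.sum_add_distrib, ← Finset.sum_sub_distrib]
    exact Finset.sum_congr rfl fun v _ => by ring
  have hd2 : 0 ≤ ∑ v, (F v - f v) ^ 2 := Finset.sum_nonneg fun v _ => sq_nonneg _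
  rw [hsumF]
  nlinarith [mul_nonneg hτ.le (neg_nonneg.2 hS)]
end

section
/- Let V be a nonempty finite set with N = |V|, let τ > 0 and ε > 0 with τ·ε·N < 1, and define the constant weights g(v,u) = −ε for u ≠ v and g(v,v) = 0. If f, F : V → ℝ satisfy one step of the semi-implicit scheme, i.e. F(v) − f(v) = τ·∑_{u∈V} g(v,u)·(F(u) − F(v)) for every v ∈ V, then for all v, u ∈ V: F(v) − F(u) = (f(v) − f(u)) / (1 − τ·ε·N); in particular, if f(v) ≠ f(u) then |F(v) − F(u)| > |f(v) − f(u)|. -/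
/-- With constant negative weights −ε on the complete graph (backward
diffusion, τεN < 1), one step of the semi-implicit scheme expands all
pairwise differences by the factor 1/(1 − τ·ε·N). -/
theorem scheme_step_backward_diffusion_repulsion
    {V : Type*} [Fintype V] [Nonempty V] [DecidableEq V]
    (τ ε : ℝ) (hτ : 0 < τ) (hε : 0 < ε)
    (hsmall : τ * ε * (Fintype.card V : ℝ) < 1)
    (f F : V → ℝ)
    (hstep : ∀ v, F v - f v =
      τ * ∑ u, (if u = v then 0 else -ε) * (F u - F v)) :
    ∀ v u, F v - F u = (f v - f u) / (1 - τ * ε * (Fintype.card V : ℝ)) ∧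
      (f v ≠ f u → |f v - f u| < |F v - F u|) := by
  set N : ℝ := (Fintype.card V : ℝ) with hNdef
  have hN1 : 0 < 1 - τ * ε * N := by linarith
  have key : ∀ v, F v - f v = -(τ * ε) * ((∑ u, F u) - N * F v) := by
    intro v
    have h := hstep v
    have h2 : ∑ u, (if u = v then 0 else -ε) * (F u - F v)
        = ∑ u, -ε * (F u - F v) := by
      refine Finset.sum_congr rfl fun u _ => ?_
      by_cases hu : u = v <;> simp [hu]
    rw [h2] at h
    have h3 : ∑ u, -ε * (F u - F v) = -ε * ((∑ u, F u) - N * F v) := by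
      rw [← Finset.mul_sum, Finset.sum_sub_distrib, Finset.sum_const,
        Finset.card_univ, nsmul_eq_mul]
    rw [h3] at h
    rw [h]; ring
  intro v u
  have hv := key v
  have hu := key u
  have hmain : F v - F u = (f v - f u) / (1 - τ * ε * N) := by
    field_simp
    nlinarith [hv, hu]
  refine ⟨hmain, fun hne => ?_⟩
  have hne' : f v - f u ≠ 0 := sub_ne_zero.mpr hne
  rw [hmain, abs_div, abs_of_pos hN1]
  have h1 : 1 - τ * ε * N < 1 := by
    have : 0 < τ * ε * N := by
      have : (0:ℝ) < N := by positivity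
      positivity
    linarith
  have habs : 0 < |f v - f u| := abs_pos.mpr hne'
  calc |f v - f u| = |f v - f u| / 1 := by ring
    _ < |f v - f u| / (1 - τ * ε * N) := by
        apply div_lt_div_of_pos_left habs hN1 h1
end
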